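/- arXiv:2206.05933 — 2 statements merged into one kernel-verified Lean document; each statement's English description precedes it below -/
import Mathlib

section
/- For integers n ≥ 1 and p ≥ 1, the p-variation norm of the function t ↦ cos(nπt) − 1 on [0,1] equals 2 n^{1/p}; that is, the supremum over all finite partitions 0 = t_0 < t_1 < ... < t_N = 1 of (Σ_i |cos(nπ t_i) − cos(nπ t_{i-1})|^p)^{1/p} equals 2 n^{1/p}. -/
/-!
The lower bound comes from the partition `t_i = i / n`, on which `cos (n π t)` alternates between
`1` and `-1`, so that every increment has size `2`. For the upper bound, each increment of a
partition has size at most `2`, so `∑ |Δ_i|^p ≤ 2^(p-1) ∑ |Δ_i|`, and `∑ |Δ_i|` is at most the total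
variation `∫₀¹ |d/dt cos (n π t)| dt = ∫₀^{nπ} |sin| = 2n`.
-/

open Real

/-- The set of `p`-variation partition sums of a function `f` on `[0,1]`:
values `(∑ i |f(t_i) - f(t_{i-1})|^p)^{1/p}` over finite partitions
`0 = t_0 < t_1 < ... < t_N = 1`. -/
def pVarSums (p : ℝ) (f : ℝ → ℝ) : Set ℝ :=
  {x : ℝ | ∃ (N : ℕ) (t : Fin (N + 1) → ℝ), StrictMono t ∧ t 0 = 0 ∧ t (Fin.last N) = 1 ∧
    x = (∑ i : Fin N, |f (t i.succ) - f (t i.castSucc)| ^ p) ^ (1 / p)}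

open intervalIntegral

theorem Fin.sum_succ_sub_castSucc {M : Type*} [AddCommGroup M] {N : ℕ} (f : Fin (N + 1) → M) :
    ∑ i : Fin N, (f i.succ - f i.castSucc) = f (Fin.last N) - f 0 := by
  have h₀ := Fin.sum_univ_succ f
  have h₁ := Fin.sum_univ_castSucc f
  rw [Finset.sum_sub_distrib]
  calc ∑ i : Fin N, f i.succ - ∑ i : Fin N, f i.castSucc
      = (f 0 + ∑ i : Fin N, f i.succ) - (∑ i : Fin N, f i.castSucc + f (Fin.last N))
          + f (Fin.last N) - f 0 := by abel
    _ = f (Fin.last N) - f 0 := by rw [← h₀, ← h₁]; abel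

theorem Finset.sum_pow_succ_le_pow_mul_sum {ι : Type*} (s : Finset ι) {a : ι → ℝ} {M : ℝ}
    (h₀ : ∀ i ∈ s, 0 ≤ a i) (hM : ∀ i ∈ s, a i ≤ M) (p : ℕ) :
    ∑ i ∈ s, a i ^ (p + 1) ≤ M ^ p * ∑ i ∈ s, a i := by
  rw [Finset.mul_sum]
  refine Finset.sum_le_sum fun i hi => ?_
  rw [pow_succ]
  exact mul_le_mul_of_nonneg_right (pow_le_pow_left₀ (h₀ i hi) (hM i hi) p) (h₀ i hi)

theorem abs_sub_le_integral_abs_of_hasDerivAt {f f' : ℝ → ℝ} {a b : ℝ} (hab : a ≤ b)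
    (hf : ∀ x ∈ Set.uIcc a b, HasDerivAt f (f' x) x)
    (hf' : IntervalIntegrable f' MeasureTheory.volume a b) :
    |f b - f a| ≤ ∫ x in a..b, |f' x| := by
  rw [← integral_eq_sub_of_hasDerivAt hf hf']
  exact abs_integral_le_integral_abs hab

theorem sum_abs_sub_le_integral_abs_of_hasDerivAt {f f' : ℝ → ℝ}
    (hf : ∀ x, HasDerivAt f (f' x) x) (hf' : Continuous f') {N : ℕ} {t : Fin (N + 1) → ℝ}
    (ht : Monotone t) :
    ∑ i : Fin N, |f (t i.succ) - f (t i.castSucc)| ≤ ∫ x in t 0..t (Fin.last N), |f' x| := by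
  have hint : ∀ a b, IntervalIntegrable (fun x => |f' x|) MeasureTheory.volume a b :=
    fun a b => hf'.abs.intervalIntegrable a b
  calc ∑ i : Fin N, |f (t i.succ) - f (t i.castSucc)|
      ≤ ∑ i : Fin N, ∫ x in t i.castSucc..t i.succ, |f' x| :=
        Finset.sum_le_sum fun i _ => abs_sub_le_integral_abs_of_hasDerivAt
          (ht (Fin.castSucc_le_succ i)) (fun x _ => hf x) (hf'.intervalIntegrable _ _)
    _ = ∑ i : Fin N, ((∫ x in 0..t i.succ, |f' x|) - ∫ x in 0..t i.castSucc, |f' x|) := by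
        simp only [integral_interval_sub_left (hint _ _) (hint _ _)]
    _ = ∫ x in t 0..t (Fin.last N), |f' x| := by
        rw [Fin.sum_succ_sub_castSucc (fun i => ∫ x in 0..t i, |f' x|),
          integral_interval_sub_left (hint _ _) (hint _ _)]

theorem pVarSums_sub_const (p c : ℝ) (f : ℝ → ℝ) :
    pVarSums p (fun t => f t - c) = pVarSums p f := by
  simp only [pVarSums, sub_sub_sub_cancel_right]

theorem le_of_mem_pVarSums {f f' : ℝ → ℝ} {M : ℝ} {p : ℕ} (hp : 1 ≤ p)
    (hf : ∀ x, HasDerivAt f (f' x) x) (hf' : Continuous f') (hM : ∀ a b, |f b - f a| ≤ M)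
    {x : ℝ} (hx : x ∈ pVarSums p f) :
    x ≤ (M ^ (p - 1) * ∫ t in 0..1, |f' t|) ^ (1 / (p : ℝ)) := by
  obtain ⟨N, t, ht, ht₀, ht₁, rfl⟩ := hx
  simp only [rpow_natCast]
  refine rpow_le_rpow (by positivity) ?_ (by positivity)
  calc ∑ i : Fin N, |f (t i.succ) - f (t i.castSucc)| ^ p
      ≤ M ^ (p - 1) * ∑ i : Fin N, |f (t i.succ) - f (t i.castSucc)| := by
        simpa only [Nat.sub_add_cancel hp] using Finset.sum_pow_succ_le_pow_mul_sum _
          (fun i _ => abs_nonneg _) (fun i _ => hM _ _) (p - 1)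
    _ ≤ M ^ (p - 1) * ∫ t in 0..1, |f' t| := by
        have hM₀ : 0 ≤ M := (abs_nonneg _).trans (hM 0 0)
        gcongr
        simpa only [ht₀, ht₁] using sum_abs_sub_le_integral_abs_of_hasDerivAt hf hf' ht.monotone

theorem integral_abs_sin_zero_nat_mul_pi (n : ℕ) : ∫ x in (0 : ℝ)..n * π, |sin x| = 2 * n := by
  have hper : Function.Periodic (fun x => |sin x|) π := fun x => by
    simp [sin_antiperiodic x]
  have h := hper.intervalIntegral_add_zsmul_eq (n : ℤ) 0
    (fun a b => continuous_sin.abs.intervalIntegrable a b)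
  have hπ : ∫ x in (0 : ℝ)..π, |sin x| = 2 := by
    rw [integral_congr (g := sin) fun x hx => abs_of_nonneg <| by
      rw [Set.uIcc_of_le pi_pos.le] at hx
      exact sin_nonneg_of_nonneg_of_le_pi hx.1 hx.2]
    norm_num
  simpa [hπ, mul_comm] using h

theorem integral_abs_deriv_cos_nat_mul_pi (n : ℕ) (hn : 1 ≤ n) :
    ∫ t in (0 : ℝ)..1, |-sin (n * π * t) * (n * π)| = 2 * n := by
  have hc : (n : ℝ) * π ≠ 0 := by positivity
  simp only [abs_mul, abs_neg, abs_of_pos (by positivity : (0 : ℝ) < n * π)]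
  rw [integral_mul_const, integral_comp_mul_left (fun x => |sin x|) hc, mul_zero, mul_one,
    integral_abs_sin_zero_nat_mul_pi, smul_eq_mul]
  field_simp

theorem pow_mul_rpow_one_div {a b : ℝ} (ha : 0 ≤ a) (hb : 0 ≤ b) {p : ℕ} (hp : p ≠ 0) :
    (a ^ p * b) ^ (1 / (p : ℝ)) = a * b ^ (1 / (p : ℝ)) := by
  rw [mul_rpow (by positivity) hb, one_div, pow_rpow_inv_natCast ha hp]

theorem mem_pVarSums_cos_nat_mul_pi (n p : ℕ) (hn : 1 ≤ n) :
    ((2 : ℝ) ^ p * n) ^ (1 / (p : ℝ)) ∈ pVarSums p (fun t => cos (n * π * t)) := by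
  have hn₀ : (0 : ℝ) < n := by exact_mod_cast hn
  refine ⟨n, fun i => (i : ℕ) / n, fun i j hij => ?_, by simp, by simp [hn₀.ne'], ?_⟩
  · exact div_lt_div_of_pos_right (by exact_mod_cast hij) hn₀
  have hterm : ∀ i : Fin n,
      |cos (n * π * ((i.succ : ℕ) / n)) - cos (n * π * ((i.castSucc : ℕ) / n))| ^ (p : ℝ) = 2 ^ p := by
    intro i
    have hk : ∀ k : ℕ, (n : ℝ) * π * (k / n) = k * π := fun k => by field_simp
    rw [hk, hk, Fin.val_succ, Fin.val_castSucc, cos_nat_mul_pi, cos_nat_mul_pi, pow_succ,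
      rpow_natCast]
    rcases neg_one_pow_eq_or ℝ (i : ℕ) with h | h <;> norm_num [h]
  simp only [hterm, Finset.sum_const, Finset.card_univ, Fintype.card_fin, nsmul_eq_mul]
  rw [mul_comm]

/-- For integers `n ≥ 1` and `p ≥ 1`, the `p`-variation norm of
`t ↦ cos (n π t) - 1` on `[0,1]` equals `2 n^{1/p}`. -/
theorem stmt_0 (n p : ℕ) (hn : 1 ≤ n) (hp : 1 ≤ p) :
    sSup (pVarSums (p : ℝ) (fun t => Real.cos (n * Real.pi * t) - 1)) =
      2 * (n : ℝ) ^ ((1 : ℝ) / p) := by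
  have hp₀ : p ≠ 0 := by omega
  have hvalue : ((2 : ℝ) ^ p * n) ^ (1 / (p : ℝ)) = 2 * (n : ℝ) ^ (1 / (p : ℝ)) :=
    pow_mul_rpow_one_div zero_le_two n.cast_nonneg hp₀
  have hderiv : ∀ x : ℝ, HasDerivAt (fun t => cos (n * π * t)) (-sin (n * π * x) * (n * π)) x :=
    fun x => by simpa using ((hasDerivAt_id x).const_mul ((n : ℝ) * π)).cos
  rw [pVarSums_sub_const]
  refine IsGreatest.csSup_eq ⟨?_, fun x hx => ?_⟩
  · exact hvalue ▸ mem_pVarSums_cos_nat_mul_pi n p hn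
  · have hcos : ∀ a b : ℝ, |cos (n * π * b) - cos (n * π * a)| ≤ 2 := fun a b =>
      (abs_sub _ _).trans (by linarith [abs_cos_le_one (n * π * a), abs_cos_le_one (n * π * b)])
    have hbound := le_of_mem_pVarSums hp hderiv (by fun_prop) hcos hx
    rwa [integral_abs_deriv_cos_nat_mul_pi n hn, ← mul_assoc, ← pow_succ,
      Nat.sub_add_cancel hp, hvalue] at hbound
end

section
/- Let b^H be a one-dimensional fBm with H ∈ (1/3,1/2), let b^H(m) denote its piecewise-linear dyadic interpolation at level m, and let w be an independent Brownian motion with interpolation w(m). Then E[|Σ_{k=1}^{2^m} (2^m ∫_{t_{k-1}^m}^{t_k^m} b^H(m)_u du − b^H_{t_{k-1}^m}) (w_{t_k^m} − w_{t_{k-1}^m})|²] ≤ C 2^{-2mH} for a constant C independent of m. -/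
open MeasureTheory ProbabilityTheory

/-- Piecewise-linear interpolation of `f` on the level-`m` dyadic grid `{k/2^m}`. -/
noncomputable def dyadicInterp (m : ℕ) (f : ℝ → ℝ) (t : ℝ) : ℝ :=
  f ((⌊t * 2 ^ m⌋ : ℝ) / 2 ^ m) +
    (t * 2 ^ m - (⌊t * 2 ^ m⌋ : ℝ)) *
      (f (((⌊t * 2 ^ m⌋ : ℝ) + 1) / 2 ^ m) - f ((⌊t * 2 ^ m⌋ : ℝ) / 2 ^ m))

/-!
By the trapezoid rule each summand is half the product of the increments of `b` and `w` over its
dyadic cell, so the integrand is `(Y / 2)²` with `Y = ∑ₖ Δₖb Δₖw`. Resetting `w 0` to `0` turns `Y`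
into `U`, and independence together with the orthogonality of the increments of `w` gives
`E[U²] = ∑ₖ E[(Δₖb)²] E[(Δₖw)²] = 2^m ⋅ 2^(-2mH) ⋅ 2^(-m)`.

`w 0` need not be measurable or square integrable (the covariance identity at `s = t = 0` can hold
through the junk value `0` of a non-integrable integral), so `U - Y = Δ₁b ⋅ w 0` is controlled by
`κ = ∫ P(w 0 ² > s) ds`, the layer-cake integral taken with the outer measure. Independence bounds
`P(Δ₁b² > c) κ` by the layer-cake integral of `(U - Y)²`, so `κ < ∞` as soon as `Y²` is integrable,
and then a dyadic decomposition of `Δ₁b²` gives `E[Y²] ≤ 4 E[U²] + 8 E[(Δ₁b)²] κ`. When `Y²` is not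
integrable its integral is `0`.
-/

open Set
open scoped ENNReal

lemma dyadicInterp_eq_of_mem_Ioo (m : ℕ) (f : ℝ → ℝ) (j : ℤ) {u : ℝ}
    (hu : u ∈ Ioo ((j : ℝ) / 2 ^ m) ((j + 1) / 2 ^ m)) :
    dyadicInterp m f u =
      f (j / 2 ^ m) + (u * 2 ^ m - j) * (f ((j + 1) / 2 ^ m) - f (j / 2 ^ m)) := by
  have h2 : (0 : ℝ) < 2 ^ m := by positivity
  have hfloor : ⌊u * 2 ^ m⌋ = j := by
    rw [Int.floor_eq_iff]
    exact ⟨((div_lt_iff₀ h2).1 hu.1).le, (lt_div_iff₀ h2).1 hu.2⟩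
  simp only [dyadicInterp, hfloor]

lemma two_pow_mul_integral_dyadicInterp (m : ℕ) (f : ℝ → ℝ) (j : ℤ) :
    2 ^ m * ∫ u in Icc ((j : ℝ) / 2 ^ m) ((j + 1) / 2 ^ m), dyadicInterp m f u =
      (f (j / 2 ^ m) + f ((j + 1) / 2 ^ m)) / 2 := by
  have hle : (j : ℝ) / 2 ^ m ≤ (j + 1) / 2 ^ m := by gcongr; linarith
  rw [integral_Icc_eq_integral_Ioo, setIntegral_congr_fun measurableSet_Ioo
    (fun u hu => dyadicInterp_eq_of_mem_Ioo m f j hu), ← integral_Ioc_eq_integral_Ioo,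
    ← intervalIntegral.integral_of_le hle, intervalIntegral.integral_add intervalIntegrable_const
    (Continuous.intervalIntegrable (by fun_prop) _ _)]
  simp only [intervalIntegral.integral_const, smul_eq_mul, intervalIntegral.integral_mul_const,
    intervalIntegral.integral_sub (intervalIntegral.intervalIntegrable_id.mul_const _)
      intervalIntegrable_const, integral_id]
  field_simp
  ring

def discreteCovariation (f g : ℝ → ℝ) (t : ℕ → ℝ) (n : ℕ) : ℝ :=
  ∑ k ∈ Finset.range n, (f (t (k + 1)) - f (t k)) * (g (t (k + 1)) - g (t k))

lemma sq_discreteCovariation (f g : ℝ → ℝ) (t : ℕ → ℝ) (n : ℕ) :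
    discreteCovariation f g t n ^ 2 = ∑ k ∈ Finset.range n, ∑ j ∈ Finset.range n,
      ((f (t (k + 1)) - f (t k)) * (f (t (j + 1)) - f (t j))) *
        ((g (t (k + 1)) - g (t k)) * (g (t (j + 1)) - g (t j))) := by
  rw [discreteCovariation, sq, Finset.sum_mul_sum]
  exact Finset.sum_congr rfl fun k _ => Finset.sum_congr rfl fun j _ => by ring

lemma sum_mul_increment_eq_half_discreteCovariation (m : ℕ) (f g : ℝ → ℝ) :
    ∑ k ∈ Finset.Icc (1 : ℕ) (2 ^ m),
      ((2 : ℝ) ^ m * (∫ u in Icc (((k : ℝ) - 1) / 2 ^ m) ((k : ℝ) / 2 ^ m), dyadicInterp m f u) -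
        f (((k : ℝ) - 1) / 2 ^ m)) * (g ((k : ℝ) / 2 ^ m) - g (((k : ℝ) - 1) / 2 ^ m)) =
      discreteCovariation f g (fun k => k / 2 ^ m) (2 ^ m) / 2 := by
  rw [← Finset.Ico_add_one_right_eq_Icc, Finset.sum_Ico_eq_sum_range, discreteCovariation,
    Finset.sum_div, add_tsub_cancel_right]
  refine Finset.sum_congr rfl fun k _ => ?_
  have h := two_pow_mul_integral_dyadicInterp m f k
  push_cast at h ⊢
  rw [add_sub_cancel_left, add_comm 1 (k : ℝ), h]
  ring

lemma discreteCovariation_update_zero (f g : ℝ → ℝ) {t : ℕ → ℝ} (ht0 : t 0 = 0)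
    (ht : StrictMono t) {n : ℕ} (hn : 0 < n) :
    discreteCovariation f (Function.update g 0 0) t n =
      discreteCovariation f g t n + (f (t 1) - f (t 0)) * g 0 := by
  obtain ⟨n, rfl⟩ := Nat.exists_eq_add_one_of_ne_zero hn.ne'
  have hne : ∀ k, t (k + 1) ≠ 0 := fun k => (ht0 ▸ ht k.succ_pos).ne'
  simp only [discreteCovariation, Finset.sum_range_succ', Function.update_of_ne (hne _), ht0,
    Function.update_self]
  ring

lemma increment_mul_increment_eq {Ω : Type*} (W : ℝ → Ω → ℝ) (a b c d : ℝ) :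
    (fun ω => (W b ω - W a ω) * (W d ω - W c ω)) =
      ((fun ω => W d ω * W b ω) - fun ω => W c ω * W b ω) -
        ((fun ω => W d ω * W a ω) - fun ω => W c ω * W a ω) := by
  ext ω
  simp only [Pi.sub_apply]
  ring

lemma update_zero_apply {Ω : Type*} (w : ℝ → Ω → ℝ) (ω : Ω) :
    (fun t => Function.update w 0 0 t ω) = Function.update (fun t => w t ω) 0 0 := by
  ext t
  exact Function.apply_update (fun _ x => x ω) w 0 0 t

section Increments

variable {Ω : Type*} [MeasurableSpace Ω] {P : Measure Ω} {W : ℝ → Ω → ℝ}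
  (hWi : ∀ s t, 0 ≤ s → 0 ≤ t → Integrable (fun ω => W t ω * W s ω) P)
  (hWc : ∀ s t, 0 ≤ s → 0 ≤ t → ∫ ω, W t ω * W s ω ∂P = min s t)
include hWi

lemma integrable_increment_mul_increment {a b c d : ℝ} (ha : 0 ≤ a) (hb : 0 ≤ b) (hc : 0 ≤ c)
    (hd : 0 ≤ d) : Integrable (fun ω => (W b ω - W a ω) * (W d ω - W c ω)) P := by
  rw [increment_mul_increment_eq]
  exact ((hWi b d hb hd).sub (hWi b c hb hc)).sub ((hWi a d ha hd).sub (hWi a c ha hc))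

include hWc

lemma integral_increment_mul_increment {a b c d : ℝ} (ha : 0 ≤ a) (hb : 0 ≤ b) (hc : 0 ≤ c)
    (hd : 0 ≤ d) :
    ∫ ω, (W b ω - W a ω) * (W d ω - W c ω) ∂P = min b d - min b c - (min a d - min a c) := by
  rw [increment_mul_increment_eq, integral_sub' ((hWi b d hb hd).sub (hWi b c hb hc))
    ((hWi a d ha hd).sub (hWi a c ha hc)), integral_sub' (hWi b d hb hd) (hWi b c hb hc),
    integral_sub' (hWi a d ha hd) (hWi a c ha hc), hWc b d hb hd, hWc b c hb hc, hWc a d ha hd,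
    hWc a c ha hc]

lemma integral_increment_mul_increment_of_monotone {t : ℕ → ℝ} (ht0 : 0 ≤ t 0) (ht : Monotone t)
    (k j : ℕ) : ∫ ω, (W (t (k + 1)) ω - W (t k) ω) * (W (t (j + 1)) ω - W (t j) ω) ∂P =
      if k = j then t (k + 1) - t k else 0 := by
  have hnn : ∀ i, 0 ≤ t i := fun i => ht0.trans (ht (Nat.zero_le i))
  rw [integral_increment_mul_increment hWi hWc (hnn _) (hnn _) (hnn _) (hnn _)]
  rcases lt_trichotomy k j with hkj | rfl | hjk
  · have h1 : t (k + 1) ≤ t j := ht hkj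
    have h2 : t k ≤ t j := ht hkj.le
    rw [if_neg hkj.ne, min_eq_left (h1.trans (ht j.le_succ)), min_eq_left h1,
      min_eq_left (h2.trans (ht j.le_succ)), min_eq_left h2]
    ring
  · rw [if_pos rfl, min_self, min_eq_right (ht k.le_succ), min_eq_left (ht k.le_succ), min_self]
    ring
  · have h1 : t (j + 1) ≤ t k := ht hjk
    have h2 : t j ≤ t k := ht hjk.le
    rw [if_neg hjk.ne', min_eq_right (h1.trans (ht k.le_succ)),
      min_eq_right (h2.trans (ht k.le_succ)), min_eq_right h1, min_eq_right h2]
    ring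

end Increments

section Covariation

variable {Ω : Type*} [MeasurableSpace Ω] {P : Measure Ω} {X W : ℝ → Ω → ℝ}

lemma integrable_increment_mul_increment_of_sq
    (hX : ∀ s u, Integrable (fun ω => (X u ω - X s ω) ^ 2) P) (a b c d : ℝ) :
    Integrable (fun ω => (X b ω - X a ω) * (X d ω - X c ω)) P := by
  have hpol : (fun ω => (X b ω - X a ω) * (X d ω - X c ω)) = fun ω =>
      ((X b ω - X c ω) ^ 2 + (X d ω - X a ω) ^ 2 - (X b ω - X d ω) ^ 2 - (X a ω - X c ω) ^ 2) /
        2 := by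
    ext ω; ring
  rw [hpol]
  exact ((((hX c b).add (hX a d)).sub (hX d b)).sub (hX c a)).div_const 2

lemma indepFun_increment_products (hind : IndepFun (fun ω t => X t ω) (fun ω t => W t ω) P)
    (a b c d : ℝ) : IndepFun (fun ω => (X b ω - X a ω) * (X d ω - X c ω))
      (fun ω => (W b ω - W a ω) * (W d ω - W c ω)) P :=
  hind.comp (φ := fun f : ℝ → ℝ => (f b - f a) * (f d - f c))
    (ψ := fun f : ℝ → ℝ => (f b - f a) * (f d - f c)) (by fun_prop) (by fun_prop)

variable (hX : ∀ s u, Integrable (fun ω => (X u ω - X s ω) ^ 2) P)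
  (hWi : ∀ s t, 0 ≤ s → 0 ≤ t → Integrable (fun ω => W t ω * W s ω) P)
  (hind : IndepFun (fun ω t => X t ω) (fun ω t => W t ω) P)
  {t : ℕ → ℝ} (ht0 : 0 ≤ t 0) (ht : Monotone t)
include hX hWi hind ht0 ht

lemma integrable_increment_products (k j : ℕ) :
    Integrable (fun ω => ((X (t (k + 1)) ω - X (t k) ω) * (X (t (j + 1)) ω - X (t j) ω)) *
      ((W (t (k + 1)) ω - W (t k) ω) * (W (t (j + 1)) ω - W (t j) ω))) P := by
  have hnn : ∀ i, 0 ≤ t i := fun i => ht0.trans (ht (Nat.zero_le i))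
  exact (indepFun_increment_products hind _ _ _ _).integrable_mul
    (integrable_increment_mul_increment_of_sq hX _ _ _ _)
    (integrable_increment_mul_increment hWi (hnn _) (hnn _) (hnn _) (hnn _))

theorem integrable_sq_discreteCovariation (n : ℕ) :
    Integrable (fun ω => discreteCovariation (X · ω) (W · ω) t n ^ 2) P := by
  simp_rw [sq_discreteCovariation]
  exact integrable_finsetSum _ fun k _ => integrable_finsetSum _ fun j _ =>
    integrable_increment_products hX hWi hind ht0 ht k j

theorem integral_sq_discreteCovariation
    (hWc : ∀ s t, 0 ≤ s → 0 ≤ t → ∫ ω, W t ω * W s ω ∂P = min s t) (n : ℕ) :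
    ∫ ω, discreteCovariation (X · ω) (W · ω) t n ^ 2 ∂P =
      ∑ k ∈ Finset.range n, (∫ ω, (X (t (k + 1)) ω - X (t k) ω) ^ 2 ∂P) * (t (k + 1) - t k) := by
  have hnn : ∀ i, 0 ≤ t i := fun i => ht0.trans (ht (Nat.zero_le i))
  have hterm : ∀ k j, ∫ ω, ((X (t (k + 1)) ω - X (t k) ω) * (X (t (j + 1)) ω - X (t j) ω)) *
      ((W (t (k + 1)) ω - W (t k) ω) * (W (t (j + 1)) ω - W (t j) ω)) ∂P =
        if k = j then (∫ ω, (X (t (k + 1)) ω - X (t k) ω) ^ 2 ∂P) * (t (k + 1) - t k) else 0 := by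
    intro k j
    rw [(indepFun_increment_products hind _ _ _ _).integral_fun_mul_eq_mul_integral
      (integrable_increment_mul_increment_of_sq hX _ _ _ _).aestronglyMeasurable
      (integrable_increment_mul_increment hWi (hnn _) (hnn _) (hnn _) (hnn _)).aestronglyMeasurable,
      integral_increment_mul_increment_of_monotone hWi hWc ht0 ht]
    split_ifs with hkj
    · subst hkj
      simp only [sq]
    · rw [mul_zero]
  simp_rw [sq_discreteCovariation]
  rw [integral_finsetSum _ fun k _ => integrable_finsetSum _ fun j _ =>
    integrable_increment_products hX hWi hind ht0 ht k j]
  refine Finset.sum_congr rfl fun k hk => ?_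
  rw [integral_finsetSum _ fun j _ => integrable_increment_products hX hWi hind ht0 ht k j]
  simp_rw [hterm]
  rw [Finset.sum_ite_eq, if_pos hk]

end Covariation

lemma setLIntegral_Ioi_comp_div (ν : ℝ → ℝ≥0∞) (hν : Measurable ν) {c : ℝ} (hc : 0 < c) :
    ∫⁻ t in Ioi 0, ν (t / c) = ENNReal.ofReal c * ∫⁻ t in Ioi 0, ν t := by
  have hmap : Measure.map (fun t => c⁻¹ * t) (volume.restrict (Ioi (0 : ℝ))) =
      (ENNReal.ofReal c • volume).restrict (Ioi 0) := by
    have hpre : (fun t => c⁻¹ * t) ⁻¹' Ioi 0 = Ioi 0 := by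
      ext t; simp [hc]
    rw [show ENNReal.ofReal c = ENNReal.ofReal |c⁻¹⁻¹| by rw [inv_inv, abs_of_pos hc],
      ← Real.map_volume_mul_left (inv_ne_zero hc.ne'),
      Measure.restrict_map (measurable_const_mul _) measurableSet_Ioi, hpre]
  simp_rw [div_eq_inv_mul]
  rw [← lintegral_map hν (measurable_const_mul _), hmap, Measure.restrict_smul,
    lintegral_smul_measure, smul_eq_mul]

section TailLIntegral

variable {Ω : Type*} [MeasurableSpace Ω] {μ : Measure Ω}

/-- Equal to `∫⁻ ω, ENNReal.ofReal (f ω) ∂μ` for measurable `f ≥ 0` (layer cake), but meaningful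
for any `f`: the measure of a non-measurable set is its outer measure. -/
noncomputable def tailLIntegral (μ : Measure Ω) (f : Ω → ℝ) : ℝ≥0∞ :=
  ∫⁻ t in Ioi 0, μ {ω | t < f ω}

lemma measurable_measure_setOf_lt (f : Ω → ℝ) : Measurable fun t : ℝ => μ {ω | t < f ω} :=
  Antitone.measurable fun _ _ hst => measure_mono fun _ hω => hst.trans_lt hω

lemma tailLIntegral_eq_ofReal_integral {f : Ω → ℝ} (hf : Integrable f μ) (hnn : 0 ≤ f) :
    tailLIntegral μ f = ENNReal.ofReal (∫ ω, f ω ∂μ) := by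
  rw [tailLIntegral, ← lintegral_eq_lintegral_meas_lt μ (.of_forall hnn) hf.aemeasurable,
    ofReal_integral_eq_lintegral_ofReal hf (.of_forall hnn)]

lemma tailLIntegral_le_of_le_add {f g h : Ω → ℝ} (hle : ∀ ω, f ω ≤ g ω + h ω) :
    tailLIntegral μ f ≤
      tailLIntegral μ (fun ω => 2 * g ω) + tailLIntegral μ (fun ω => 2 * h ω) := by
  rw [tailLIntegral, tailLIntegral, tailLIntegral,
    ← lintegral_add_left (measurable_measure_setOf_lt _)]
  refine lintegral_mono fun t => (measure_mono fun ω hω => ?_).trans (measure_union_le _ _)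
  by_contra hcon
  simp only [mem_union, mem_ofPred_eq, not_or, not_lt] at hω hcon
  linarith [hle ω]

lemma measure_one_lt_mul_tailLIntegral_le {F G : Ω → ℝ} (hFG : IndepFun F G μ) :
    μ {ω | 1 < F ω} * tailLIntegral μ G ≤ tailLIntegral μ (fun ω => F ω * G ω) := by
  rw [tailLIntegral, tailLIntegral, ← lintegral_const_mul _ (measurable_measure_setOf_lt _)]
  refine setLIntegral_mono (measurable_measure_setOf_lt _) fun s hs => ?_
  calc μ {ω | 1 < F ω} * μ {ω | s < G ω} = μ (F ⁻¹' Ioi 1 ∩ G ⁻¹' Ioi s) :=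
        (hFG.measure_inter_preimage_eq_mul _ _ measurableSet_Ioi measurableSet_Ioi).symm
    _ ≤ μ {ω | s < F ω * G ω} := measure_mono fun ω ⟨hF, hG⟩ => by
        simp only [mem_preimage, mem_Ioi, mem_ofPred_eq] at hF hG ⊢
        nlinarith [mem_Ioi.1 hs]

lemma measure_lt_ne_zero_of_lt_integral [IsProbabilityMeasure μ] {F : Ω → ℝ}
    (hF : Integrable F μ) {c : ℝ} (hc : c < ∫ ω, F ω ∂μ) : μ {ω | c < F ω} ≠ 0 := by
  intro h0
  have hae : ∀ᵐ ω ∂μ, F ω ≤ c := by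
    rw [ae_iff]; simpa only [not_le] using h0
  have := integral_mono_ae hF (integrable_const c) hae
  simp only [integral_const, probReal_univ, smul_eq_mul, one_mul] at this
  linarith

lemma tsum_ofReal_zpow_mul_measure_le_lintegral {F : Ω → ℝ} (hFm : Measurable F) :
    ∑' i : ℤ, ENNReal.ofReal (2 ^ i) * μ (F ⁻¹' Ioc (2 ^ i) (2 ^ (i + 1))) ≤
      ∫⁻ ω, ENNReal.ofReal (F ω) ∂μ := by
  have hdisj : Pairwise (Function.onFun Disjoint fun i : ℤ => F ⁻¹' Ioc (2 ^ i) (2 ^ (i + 1))) := by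
    intro i j hij
    wlog hlt : i < j generalizing i j
    · exact (this hij.symm (hij.symm.lt_of_le (not_lt.1 hlt))).symm
    refine Disjoint.preimage F (disjoint_left.2 fun x hi hj => ?_)
    have : (2 : ℝ) ^ (i + 1) ≤ 2 ^ j := zpow_le_zpow_right₀ one_le_two (by omega)
    linarith [hi.2, hj.1]
  calc ∑' i : ℤ, ENNReal.ofReal (2 ^ i) * μ (F ⁻¹' Ioc (2 ^ i) (2 ^ (i + 1)))
      ≤ ∑' i : ℤ, ∫⁻ ω in F ⁻¹' Ioc (2 ^ i) (2 ^ (i + 1)), ENNReal.ofReal (F ω) ∂μ :=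
        ENNReal.tsum_le_tsum fun i => by
          rw [← setLIntegral_const]
          exact setLIntegral_mono hFm.ennreal_ofReal fun ω hω => ENNReal.ofReal_le_ofReal hω.1.le
    _ = ∫⁻ ω in ⋃ i : ℤ, F ⁻¹' Ioc (2 ^ i) (2 ^ (i + 1)), ENNReal.ofReal (F ω) ∂μ :=
        (lintegral_iUnion (fun i => hFm measurableSet_Ioc) hdisj _).symm
    _ ≤ ∫⁻ ω, ENNReal.ofReal (F ω) ∂μ := setLIntegral_le_lintegral _ _

lemma measure_lt_mul_le_tsum {F G : Ω → ℝ} (hFnn : 0 ≤ F) (hFG : IndepFun F G μ) {t : ℝ}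
    (ht : 0 < t) :
    μ {ω | t < F ω * G ω} ≤
      ∑' i : ℤ, μ (F ⁻¹' Ioc (2 ^ i) (2 ^ (i + 1))) * μ {ω | t / 2 ^ (i + 1) < G ω} :=
  calc μ {ω | t < F ω * G ω}
      ≤ μ (⋃ i : ℤ, F ⁻¹' Ioc (2 ^ i) (2 ^ (i + 1)) ∩ G ⁻¹' Ioi (t / 2 ^ (i + 1))) := by
        refine measure_mono fun ω (hω : t < F ω * G ω) => ?_
        obtain ⟨hF, hG⟩ := (pos_and_pos_or_neg_and_neg_of_mul_pos (ht.trans hω)).resolve_right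
          fun h => (hFnn ω).not_gt h.1
        obtain ⟨i, hi⟩ := exists_mem_Ioc_zpow hF one_lt_two
        refine mem_iUnion.2 ⟨i, hi, ?_⟩
        rw [mem_preimage, mem_Ioi, div_lt_iff₀ (by positivity)]
        nlinarith [hi.2]
    _ ≤ ∑' i : ℤ, μ (F ⁻¹' Ioc (2 ^ i) (2 ^ (i + 1)) ∩ G ⁻¹' Ioi (t / 2 ^ (i + 1))) :=
        measure_iUnion_le _
    _ = _ := tsum_congr fun i =>
        hFG.measure_inter_preimage_eq_mul _ _ measurableSet_Ioc measurableSet_Ioi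

lemma tailLIntegral_mul_le_of_measurable {F G : Ω → ℝ} (hFm : Measurable F) (hFnn : 0 ≤ F)
    (hFG : IndepFun F G μ) :
    tailLIntegral μ (fun ω => F ω * G ω) ≤
      2 * (∫⁻ ω, ENNReal.ofReal (F ω) ∂μ) * tailLIntegral μ G := by
  set A : ℤ → Set Ω := fun i => F ⁻¹' Ioc (2 ^ i) (2 ^ (i + 1))
  have hν := measurable_measure_setOf_lt (μ := μ) G
  have hmeas : ∀ i : ℤ, Measurable fun t : ℝ => μ (A i) * μ {ω | t / 2 ^ (i + 1) < G ω} :=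
    fun i => (hν.comp (measurable_div_const _)).const_mul _
  calc tailLIntegral μ (fun ω => F ω * G ω)
      ≤ ∫⁻ t in Ioi 0, ∑' i, μ (A i) * μ {ω | t / 2 ^ (i + 1) < G ω} :=
        setLIntegral_mono (Measurable.tsum hmeas) fun t ht => measure_lt_mul_le_tsum hFnn hFG ht
    _ = ∑' i : ℤ, μ (A i) * (ENNReal.ofReal (2 ^ (i + 1)) * tailLIntegral μ G) := by
        rw [lintegral_tsum fun i => (hmeas i).aemeasurable]
        refine tsum_congr fun i => ?_
        rw [lintegral_const_mul, setLIntegral_Ioi_comp_div _ hν (by positivity), tailLIntegral]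
        exact hν.comp (measurable_div_const _)
    _ = 2 * (∑' i : ℤ, ENNReal.ofReal (2 ^ i) * μ (A i)) * tailLIntegral μ G := by
        rw [← ENNReal.tsum_mul_left, ← ENNReal.tsum_mul_right]
        refine tsum_congr fun i => ?_
        rw [zpow_add_one₀ two_ne_zero, ENNReal.ofReal_mul (by positivity)]
        simp only [ENNReal.ofReal_ofNat]
        ring
    _ ≤ 2 * (∫⁻ ω, ENNReal.ofReal (F ω) ∂μ) * tailLIntegral μ G := by
        gcongr
        exact tsum_ofReal_zpow_mul_measure_le_lintegral hFm

lemma tailLIntegral_mul_le {F G : Ω → ℝ} (hF : AEMeasurable F μ) (hFnn : 0 ≤ F)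
    (hFG : IndepFun F G μ) :
    tailLIntegral μ (fun ω => F ω * G ω) ≤
      2 * (∫⁻ ω, ENNReal.ofReal (F ω) ∂μ) * tailLIntegral μ G := by
  set F' : Ω → ℝ := fun ω => max (hF.mk F ω) 0
  have hae : F =ᵐ[μ] F' := hF.ae_eq_mk.mono fun ω hω => by simpa [F', ← hω] using hFnn ω
  have htail : tailLIntegral μ (fun ω => F ω * G ω) = tailLIntegral μ (fun ω => F' ω * G ω) :=
    lintegral_congr fun t => measure_congr <| by
      filter_upwards [hae] with ω hω
      change (t < F ω * G ω) = (t < F' ω * G ω)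
      rw [hω]
  rw [htail, lintegral_congr_ae (hae.mono fun ω hω => by rw [hω])]
  exact tailLIntegral_mul_le_of_measurable (hF.measurable_mk.max measurable_const)
    (fun ω => le_max_right _ _) (hFG.congr hae .rfl)

lemma tailLIntegral_sq_ne_top_of_eq_add_mul [IsProbabilityMeasure μ] {U Y D G : Ω → ℝ}
    (hUY : ∀ ω, U ω = Y ω + D ω * G ω) (hU : Integrable (fun ω => U ω ^ 2) μ)
    (hY : Integrable (fun ω => Y ω ^ 2) μ) (hD : Integrable (fun ω => D ω ^ 2) μ)
    (hDpos : 0 < ∫ ω, D ω ^ 2 ∂μ) (hDG : IndepFun (fun ω => D ω ^ 2) (fun ω => G ω ^ 2) μ) :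
    tailLIntegral μ (fun ω => G ω ^ 2) ≠ ⊤ := by
  set c := 2 / ∫ ω, D ω ^ 2 ∂μ
  have hc : 0 < c := by positivity
  have hp : μ {ω | 1 < c * D ω ^ 2} ≠ 0 := by
    refine measure_lt_ne_zero_of_lt_integral (hD.const_mul c) ?_
    rw [integral_const_mul, div_mul_cancel₀ _ hDpos.ne']
    norm_num
  have hle : ∀ ω, c * D ω ^ 2 * G ω ^ 2 ≤ 2 * c * U ω ^ 2 + 2 * c * Y ω ^ 2 := by
    intro ω
    have hcDG : c * D ω ^ 2 * G ω ^ 2 = c * (U ω - Y ω) ^ 2 := by rw [hUY]; ring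
    rw [hcDG]
    nlinarith [mul_nonneg hc.le (sq_nonneg (U ω + Y ω))]
  have hfin : tailLIntegral μ (fun ω => c * D ω ^ 2 * G ω ^ 2) ≠ ⊤ := by
    refine ne_top_of_le_ne_top ?_ (tailLIntegral_le_of_le_add hle)
    rw [tailLIntegral_eq_ofReal_integral ((hU.const_mul (2 * c)).const_mul 2)
        (fun ω => by positivity),
      tailLIntegral_eq_ofReal_integral ((hY.const_mul (2 * c)).const_mul 2)
        (fun ω => by positivity)]
    exact ENNReal.add_ne_top.2 ⟨ENNReal.ofReal_ne_top, ENNReal.ofReal_ne_top⟩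
  intro htop
  refine hfin (top_unique ?_)
  calc ⊤ = μ {ω | 1 < c * D ω ^ 2} * tailLIntegral μ (fun ω => G ω ^ 2) := by
        rw [htop, ENNReal.mul_top hp]
    _ ≤ _ := measure_one_lt_mul_tailLIntegral_le (hDG.comp (measurable_const_mul c) measurable_id)

lemma integral_sq_le_of_eq_add_mul {U Y D G : Ω → ℝ}
    (hUY : ∀ ω, U ω = Y ω + D ω * G ω) (hU : Integrable (fun ω => U ω ^ 2) μ)
    (hY : Integrable (fun ω => Y ω ^ 2) μ) (hD : Integrable (fun ω => D ω ^ 2) μ)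
    (hDG : IndepFun (fun ω => D ω ^ 2) (fun ω => G ω ^ 2) μ)
    (hG : tailLIntegral μ (fun ω => G ω ^ 2) ≠ ⊤) :
    ∫ ω, Y ω ^ 2 ∂μ ≤ 4 * ∫ ω, U ω ^ 2 ∂μ +
      8 * (∫ ω, D ω ^ 2 ∂μ) * (tailLIntegral μ (fun ω => G ω ^ 2)).toReal := by
  have hle : ∀ ω, Y ω ^ 2 ≤ 2 * U ω ^ 2 + 2 * (D ω ^ 2 * G ω ^ 2) := by
    intro ω
    have hDG' : D ω ^ 2 * G ω ^ 2 = (U ω - Y ω) ^ 2 := by rw [hUY]; ring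
    rw [hDG']
    nlinarith [sq_nonneg (2 * U ω - Y ω)]
  have hprod : tailLIntegral μ (fun ω => 2 * (2 * (D ω ^ 2 * G ω ^ 2))) ≤
      2 * ENNReal.ofReal (4 * ∫ ω, D ω ^ 2 ∂μ) * tailLIntegral μ (fun ω => G ω ^ 2) := by
    have hDG4 : IndepFun (fun ω => 4 * D ω ^ 2) (fun ω => G ω ^ 2) μ :=
      hDG.comp (measurable_const_mul 4) measurable_id
    have h4 := tailLIntegral_mul_le (hD.const_mul 4).aemeasurable (fun ω => by positivity) hDG4
    rw [← ofReal_integral_eq_lintegral_ofReal (hD.const_mul 4) (.of_forall fun ω => by positivity),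
      integral_const_mul] at h4
    convert h4 using 3
    ring
  have hmain := (tailLIntegral_le_of_le_add hle).trans (add_le_add le_rfl hprod)
  rw [tailLIntegral_eq_ofReal_integral hY (fun ω => sq_nonneg _),
    tailLIntegral_eq_ofReal_integral ((hU.const_mul 2).const_mul 2) (fun ω => by positivity)]
    at hmain
  have hreal := ENNReal.toReal_mono (by finiteness) hmain
  rw [ENNReal.toReal_ofReal (integral_nonneg fun ω => sq_nonneg _),
    ENNReal.toReal_add (by finiteness) (by finiteness), ENNReal.toReal_mul, ENNReal.toReal_mul,
    ENNReal.toReal_ofReal (by positivity), ENNReal.toReal_ofReal (by positivity),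
    integral_const_mul, integral_const_mul, ENNReal.toReal_ofNat] at hreal
  linarith

end TailLIntegral

section Dyadic

variable {Ω : Type*} [MeasurableSpace Ω] {P : Measure Ω} {H : ℝ} {b w : ℝ → Ω → ℝ}

lemma integrable_sq_sub_of_integral_eq
    (hbcov : ∀ s u : ℝ, ∫ ω, (b u ω - b s ω) ^ 2 ∂P = |u - s| ^ (2 * H)) (s u : ℝ) :
    Integrable (fun ω => (b u ω - b s ω) ^ 2) P := by
  rcases eq_or_ne u s with rfl | hus
  · simp
  exact .of_integral_ne_zero (by
    rw [hbcov]; exact (Real.rpow_pos_of_pos (abs_pos.2 (sub_ne_zero.2 hus)) _).ne')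

lemma integral_update_zero_mul
    (hw : ∀ s t : ℝ, 0 ≤ s → 0 ≤ t → ∫ ω, w t ω * w s ω ∂P = min s t) {s t : ℝ} (hs : 0 ≤ s)
    (ht : 0 ≤ t) : ∫ ω, Function.update w 0 0 t ω * Function.update w 0 0 s ω ∂P = min s t := by
  rcases hs.eq_or_lt with rfl | hs
  · simp [min_eq_left ht]
  rcases ht.eq_or_lt with rfl | ht
  · simp [hs.le]
  simp only [Function.update_of_ne hs.ne', Function.update_of_ne ht.ne', hw s t hs.le ht.le]

lemma integrable_update_zero_mul
    (hw : ∀ s t : ℝ, 0 ≤ s → 0 ≤ t → ∫ ω, w t ω * w s ω ∂P = min s t) {s t : ℝ} (hs : 0 ≤ s)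
    (ht : 0 ≤ t) :
    Integrable (fun ω => Function.update w 0 0 t ω * Function.update w 0 0 s ω) P := by
  rcases hs.eq_or_lt with rfl | hs
  · simp
  rcases ht.eq_or_lt with rfl | ht
  · simp
  exact .of_integral_ne_zero (by
    rw [integral_update_zero_mul hw hs.le ht.le]; exact (lt_min hs ht).ne')

lemma indepFun_update_zero (hindep : IndepFun (fun ω t => b t ω) (fun ω t => w t ω) P) :
    IndepFun (fun ω t => b t ω) (fun ω t => Function.update w 0 0 t ω) P := by
  rw [show (fun ω t => Function.update w 0 0 t ω) = fun ω => Function.update (fun t => w t ω) 0 0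
    from funext (update_zero_apply w)]
  exact hindep.comp (φ := id) (ψ := fun g : ℝ → ℝ => Function.update g 0 0) measurable_id
    (by fun_prop)

lemma abs_sub_dyadic_rpow (m k : ℕ) (H : ℝ) :
    |((k + 1 : ℕ) : ℝ) / 2 ^ m - k / 2 ^ m| ^ (2 * H) = 2 ^ (-(2 * m * H)) := by
  rw [Nat.cast_succ, ← sub_div, add_sub_cancel_left, one_div, abs_inv, abs_pow, abs_two,
    ← Real.rpow_natCast, ← Real.rpow_neg zero_le_two, ← Real.rpow_mul zero_le_two]
  ring_nf

lemma integral_sq_discreteCovariation_dyadic {W : ℝ → Ω → ℝ}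
    (hbcov : ∀ s u : ℝ, ∫ ω, (b u ω - b s ω) ^ 2 ∂P = |u - s| ^ (2 * H))
    (hWi : ∀ s t, 0 ≤ s → 0 ≤ t → Integrable (fun ω => W t ω * W s ω) P)
    (hWc : ∀ s t, 0 ≤ s → 0 ≤ t → ∫ ω, W t ω * W s ω ∂P = min s t)
    (hind : IndepFun (fun ω t => b t ω) (fun ω t => W t ω) P) (m : ℕ) :
    ∫ ω, discreteCovariation (b · ω) (W · ω) (fun k => k / 2 ^ m) (2 ^ m) ^ 2 ∂P =
      2 ^ (-(2 * m * H)) := by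
  have hmono : Monotone fun k : ℕ => (k : ℝ) / 2 ^ m := fun i j hij => by
    simp only; gcongr
  have hstep : ∀ k : ℕ, ((k + 1 : ℕ) : ℝ) / 2 ^ m - k / 2 ^ m = (2 ^ m)⁻¹ := fun k => by
    push_cast; ring
  rw [integral_sq_discreteCovariation (integrable_sq_sub_of_integral_eq hbcov) hWi hind
    (by simp) hmono hWc]
  simp_rw [hbcov, abs_sub_dyadic_rpow, hstep, Finset.sum_const, Finset.card_range, nsmul_eq_mul]
  rw [Nat.cast_pow, Nat.cast_ofNat, mul_left_comm, mul_inv_cancel₀ (by positivity), mul_one]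

lemma integral_sq_discreteCovariation_dyadic_le [IsProbabilityMeasure P]
    (hbcov : ∀ s u : ℝ, ∫ ω, (b u ω - b s ω) ^ 2 ∂P = |u - s| ^ (2 * H))
    (hw : ∀ s t : ℝ, 0 ≤ s → 0 ≤ t → ∫ ω, w t ω * w s ω ∂P = min s t)
    (hindep : IndepFun (fun ω t => b t ω) (fun ω t => w t ω) P) (m : ℕ)
    (hY : Integrable
      (fun ω => discreteCovariation (b · ω) (w · ω) (fun k => k / 2 ^ m) (2 ^ m) ^ 2) P) :
    ∫ ω, discreteCovariation (b · ω) (w · ω) (fun k => k / 2 ^ m) (2 ^ m) ^ 2 ∂P ≤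
      4 * (1 + 2 * (tailLIntegral P fun ω => w 0 ω ^ 2).toReal) * 2 ^ (-(2 * m * H)) := by
  set t : ℕ → ℝ := fun k => k / 2 ^ m
  have ht0 : t 0 = 0 := by simp [t]
  have ht : StrictMono t := fun i j hij => by
    simp only [t]; gcongr
  have hWi : ∀ s t : ℝ, 0 ≤ s → 0 ≤ t →
      Integrable (fun ω => Function.update w 0 0 t ω * Function.update w 0 0 s ω) P :=
    fun _ _ hs ht => integrable_update_zero_mul hw hs ht
  have hind := indepFun_update_zero hindep
  set U := fun ω => discreteCovariation (b · ω) (Function.update w 0 0 · ω) t (2 ^ m)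
  set D := fun ω => b (t 1) ω - b (t 0) ω
  have hUY : ∀ ω, U ω = discreteCovariation (b · ω) (w · ω) t (2 ^ m) + D ω * w 0 ω := fun ω => by
    simp only [U, D, update_zero_apply]
    rw [discreteCovariation_update_zero _ _ ht0 ht (by positivity), ht0]
  have hU := integrable_sq_discreteCovariation (integrable_sq_sub_of_integral_eq hbcov) hWi hind
    ht0.ge ht.monotone (2 ^ m)
  have hD : Integrable (fun ω => D ω ^ 2) P := integrable_sq_sub_of_integral_eq hbcov _ _
  have hDint : ∫ ω, D ω ^ 2 ∂P = 2 ^ (-(2 * m * H)) :=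
    (hbcov _ _).trans (abs_sub_dyadic_rpow m 0 H)
  have hDG : IndepFun (fun ω => D ω ^ 2) (fun ω => w 0 ω ^ 2) P :=
    hindep.comp (φ := fun f : ℝ → ℝ => (f (t 1) - f (t 0)) ^ 2) (ψ := fun g : ℝ → ℝ => g 0 ^ 2)
      (by fun_prop) (by fun_prop)
  have hκ := tailLIntegral_sq_ne_top_of_eq_add_mul hUY hU hY hD (by rw [hDint]; positivity) hDG
  have hle := integral_sq_le_of_eq_add_mul hUY hU hY hD hDG hκ
  rw [integral_sq_discreteCovariation_dyadic hbcov hWi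
    (fun _ _ hs ht => integral_update_zero_mul hw hs ht) hind m, hDint] at hle
  linarith

end Dyadic

theorem stmt_9_general {Ω : Type*} [MeasurableSpace Ω] (P : Measure Ω) [IsProbabilityMeasure P]
    (H : ℝ) (b w : ℝ → Ω → ℝ)
    (hbcov : ∀ s u : ℝ, ∫ ω, (b u ω - b s ω) ^ 2 ∂P = |u - s| ^ (2 * H))
    (hw : ∀ s t : ℝ, 0 ≤ s → 0 ≤ t → ∫ ω, w t ω * w s ω ∂P = min s t)
    (hindep : IndepFun (fun ω => fun t => b t ω) (fun ω => fun t => w t ω) P) :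
    ∃ C > (0 : ℝ), ∀ m : ℕ,
      ∫ ω, (∑ k ∈ Finset.Icc (1 : ℕ) (2 ^ m),
          ((2 : ℝ) ^ m *
              (∫ u in Set.Icc (((k : ℝ) - 1) / 2 ^ m) ((k : ℝ) / 2 ^ m),
                dyadicInterp m (fun t => b t ω) u) -
            b (((k : ℝ) - 1) / 2 ^ m) ω) *
          (w ((k : ℝ) / 2 ^ m) ω - w (((k : ℝ) - 1) / 2 ^ m) ω)) ^ 2 ∂P ≤
        C * (2 : ℝ) ^ (-(2 * (m : ℝ) * H)) := by
  refine ⟨1 + 2 * (tailLIntegral P fun ω => w 0 ω ^ 2).toReal, by positivity, fun m => ?_⟩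
  simp_rw [fun ω => sum_mul_increment_eq_half_discreteCovariation m (b · ω) (w · ω), div_pow,
    integral_div]
  by_cases hY : Integrable
      (fun ω => discreteCovariation (b · ω) (w · ω) (fun k => k / 2 ^ m) (2 ^ m) ^ 2) P
  · have := integral_sq_discreteCovariation_dyadic_le hbcov hw hindep m hY
    linarith
  · rw [integral_undef hY, zero_div]
    positivity

/-- For a one-dimensional fBm `b` with `H ∈ (1/3,1/2)`, its dyadic piecewise-linear
interpolation `b(m)`, and an independent Brownian motion `w`:
`E[|Σ_{k=1}^{2^m} (2^m ∫_{t_{k-1}^m}^{t_k^m} b(m)_u du - b_{t_{k-1}^m})(w_{t_k^m}-w_{t_{k-1}^m})|²]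
  ≤ C 2^{-2mH}` with `C` independent of `m`. -/
theorem stmt_9 {Ω : Type*} [MeasurableSpace Ω] (P : Measure Ω) [IsProbabilityMeasure P]
    (H : ℝ) (hH1 : 1 / 3 < H) (hH2 : H < 1 / 2) (b w : ℝ → Ω → ℝ)
    (hb0 : ∀ t, ∫ ω, b t ω ∂P = 0)
    (hbcov : ∀ s u : ℝ, ∫ ω, (b u ω - b s ω) ^ 2 ∂P = |u - s| ^ (2 * H))
    (hw : ∀ s t : ℝ, 0 ≤ s → 0 ≤ t → ∫ ω, w t ω * w s ω ∂P = min s t)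
    (hindep : IndepFun (fun ω => fun t => b t ω) (fun ω => fun t => w t ω) P) :
    ∃ C > (0 : ℝ), ∀ m : ℕ,
      ∫ ω, (∑ k ∈ Finset.Icc (1 : ℕ) (2 ^ m),
          ((2 : ℝ) ^ m *
              (∫ u in Set.Icc (((k : ℝ) - 1) / 2 ^ m) ((k : ℝ) / 2 ^ m),
                dyadicInterp m (fun t => b t ω) u) -
            b (((k : ℝ) - 1) / 2 ^ m) ω) *
          (w ((k : ℝ) / 2 ^ m) ω - w (((k : ℝ) - 1) / 2 ^ m) ω)) ^ 2 ∂P ≤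
        C * (2 : ℝ) ^ (-(2 * (m : ℝ) * H)) :=
  stmt_9_general P H b w hbcov hw hindep
end
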